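/- (Two-point intersection lemma) Let f: 𝒟 × Q → ℝ∪{∞} be affine in its first argument and convex in its second, with Q compact convex, and suppose min_{q∈Q} f(p,q) ≤ 0 for all p in the convex set 𝒟. For p ∈ 𝒟 define Q(p) = {q ∈ Q : f(p,q) ≤ 0}, assumed compact, convex, nonempty. Then for any p₁, p₂ ∈ 𝒟, Q(p₁) ∩ Q(p₂) ≠ ∅. -/

import Mathlib

/-!
Write `pₜ = (1 - t) p₁ + t p₂` and `Cₜ = {q ∈ Q | f pₜ q ≤ 0}`. By affinity in `p`, a point
where `f p₁` and `f p₂` are both positive has `f pₜ` positive, so `Cₜ ⊆ C₀ ∪ C₁`. If `C₀` and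
`C₁` were disjoint, the convex, hence connected, set `Cₜ` would lie in one of them, and `[0, 1]`
would split into the parameters with `Cₜ ⊆ C₀` and those with `Cₜ ⊆ C₁`. Both parts are closed,
because `(t, q) ↦ f pₜ q` is jointly lower semicontinuous and `Q` is compact: this contradicts the
connectedness of `[0, 1]`. Joint lower semicontinuity fails at the value `⊥`, but a convex lower
semicontinuous function taking `⊥` somewhere on `Q` is `⊥` on all of `Q`, which settles that case.
-/

open Filter Topology Set

-- `ConvexOn` needs an ordered `ℝ`-module as codomain, which `EReal` is not.
def ERealConvexOn {X : Type*} [AddCommGroup X] [Module ℝ X] (s : Set X) (g : X → EReal) : Prop :=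
  ∀ x ∈ s, ∀ y ∈ s, ∀ a b : ℝ, 0 ≤ a → 0 ≤ b → a + b = 1 →
    g (a • x + b • y) ≤ (a : EReal) * g x + (b : EReal) * g y

theorem ERealConvexOn.eq_bot_of_eq_bot {X : Type*} [AddCommGroup X] [Module ℝ X]
    [TopologicalSpace X] [ContinuousAdd X] [ContinuousSMul ℝ X] {s : Set X} {g : X → EReal}
    (hs : Convex ℝ s) (hg : ERealConvexOn s g) (hlsc : LowerSemicontinuousOn g s)
    {x₀ : X} (hx₀ : x₀ ∈ s) (hbot : g x₀ = ⊥) {x : X} (hx : x ∈ s) : g x = ⊥ := by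
  by_contra hne
  -- `g` is `⊥` on the half-open segment `(x, x₀]`, which accumulates at `x`.
  have htendsto : Tendsto (fun ε : ℝ => (1 - ε) • x + ε • x₀) (𝓝[>] 0) (𝓝 x) := by
    have : Continuous (fun ε : ℝ => (1 - ε) • x + ε • x₀) := by fun_prop
    simpa using (this.tendsto 0).mono_left nhdsWithin_le_nhds
  have hsmall : ∀ᶠ ε in 𝓝[>] (0 : ℝ), ε ∈ Ioo 0 1 := Ioo_mem_nhdsGT one_pos
  have hmem : ∀ᶠ ε in 𝓝[>] (0 : ℝ), (1 - ε) • x + ε • x₀ ∈ s :=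
    hsmall.mono fun ε hε => hs hx hx₀ (by linarith [hε.2]) hε.1.le (by ring)
  obtain ⟨ε, hε, hlt⟩ := (hsmall.and ((tendsto_nhdsWithin_iff.2 ⟨htendsto, hmem⟩).eventually
    (hlsc x hx ⊥ (Ne.bot_lt hne)))).exists
  have hle := hg x hx x₀ hx₀ (1 - ε) ε (by linarith [hε.2]) hε.1.le (by ring)
  rw [hbot, EReal.coe_mul_bot_of_pos hε.1, EReal.add_bot] at hle
  exact (hle.trans_lt hlt).false

theorem LowerSemicontinuousOn.coe_mul {X : Type*} [TopologicalSpace X] {s : Set X} {c : X → ℝ}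
    {g : X → EReal} (hc : ContinuousOn c s) (hc₀ : ∀ x ∈ s, 0 ≤ c x)
    (hg : LowerSemicontinuousOn g s) (hg_ne_bot : ∀ x ∈ s, g x ≠ ⊥) :
    LowerSemicontinuousOn (fun x => (c x : EReal) * g x) s := by
  intro x hx y (hy : y < c x * g x)
  -- A real lower bound `a` for `g` near `x` with `y < c x * a` suffices.
  obtain ⟨a, ha, hya⟩ : ∃ a : ℝ, (a : EReal) < g x ∧ y < ((c x * a : ℝ) : EReal) := by
    rcases (hc₀ x hx).eq_or_lt with h0 | hpos
    · obtain ⟨a, -, ha⟩ := EReal.lt_iff_exists_real_btwn.1 (hg_ne_bot x hx).bot_lt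
      refine ⟨a, ha, ?_⟩
      simpa [← h0] using hy
    · have hcx : (0 : EReal) < c x := EReal.coe_pos.2 hpos
      rw [mul_comm, ← EReal.div_lt_iff hcx (EReal.coe_ne_top _)] at hy
      obtain ⟨a, hya, ha⟩ := EReal.lt_iff_exists_real_btwn.1 hy
      refine ⟨a, ha, ?_⟩
      rwa [EReal.div_lt_iff hcx (EReal.coe_ne_top _), mul_comm, ← EReal.coe_mul] at hya
  have hca : ∀ᶠ z in 𝓝[s] x, y < ((c z * a : ℝ) : EReal) :=
    (EReal.continuous_coe_iff.2 continuous_id).continuousAt.comp_continuousWithinAt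
      (hc x hx |>.mul continuousWithinAt_const) |>.eventually (lt_mem_nhds hya)
  filter_upwards [hca, hg x hx a ha, self_mem_nhdsWithin] with z hz hgz hzs
  calc y < ((c z * a : ℝ) : EReal) := hz
    _ = (c z : EReal) * a := EReal.coe_mul _ _
    _ ≤ (c z : EReal) * g z :=
      mul_le_mul_of_nonneg_left hgz.le (EReal.coe_nonneg.2 (hc₀ z hzs))

-- For `gᵢ = f pᵢ` with `f` affine in `p`, this is `f ((1 - t) • p₁ + t • p₂) q`.
noncomputable def mix {X : Type*} (g₁ g₂ : X → EReal) (t : ℝ) (q : X) : EReal :=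
  ((1 - t : ℝ) : EReal) * g₁ q + (t : EReal) * g₂ q

theorem EReal.coe_mul_ne_bot {c : ℝ} (hc : 0 ≤ c) {a : EReal} (ha : a ≠ ⊥) :
    (c : EReal) * a ≠ ⊥ :=
  (EReal.mul_ne_bot _ _).2 ⟨.inl (EReal.coe_ne_bot c), .inr ha, .inl (EReal.coe_ne_top c),
    .inl (EReal.coe_nonneg.2 hc)⟩

theorem lowerSemicontinuousOn_mix {X : Type*} [TopologicalSpace X] {Q : Set X}
    {g₁ g₂ : X → EReal}
    (hg₁ : LowerSemicontinuousOn g₁ Q) (hg₂ : LowerSemicontinuousOn g₂ Q)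
    (hg₁_ne_bot : ∀ q ∈ Q, g₁ q ≠ ⊥) (hg₂_ne_bot : ∀ q ∈ Q, g₂ q ≠ ⊥) :
    LowerSemicontinuousOn (fun x : ℝ × X => mix g₁ g₂ x.1 x.2) (Icc 0 1 ×ˢ Q) := by
  have h₁ : LowerSemicontinuousOn (fun x : ℝ × X => ((1 - x.1 : ℝ) : EReal) * g₁ x.2)
      (Icc 0 1 ×ˢ Q) :=
    .coe_mul (by fun_prop) (fun x hx => sub_nonneg.2 hx.1.2)
      (hg₁.comp continuous_snd.continuousOn fun x hx => hx.2) fun x hx => hg₁_ne_bot _ hx.2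
  have h₂ : LowerSemicontinuousOn (fun x : ℝ × X => (x.1 : EReal) * g₂ x.2) (Icc 0 1 ×ˢ Q) :=
    .coe_mul (by fun_prop) (fun x hx => hx.1.1)
      (hg₂.comp continuous_snd.continuousOn fun x hx => hx.2) fun x hx => hg₂_ne_bot _ hx.2
  refine h₁.add' h₂ fun x hx => EReal.continuousAt_add (.inr ?_) (.inl ?_)
  · exact EReal.coe_mul_ne_bot hx.1.1 (hg₂_ne_bot _ hx.2)
  · exact EReal.coe_mul_ne_bot (sub_nonneg.2 hx.1.2) (hg₁_ne_bot _ hx.2)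

theorem EReal.coe_mul_add_coe_mul_pos {s t : ℝ} (hs : 0 ≤ s) (ht : 0 ≤ t) (hst : s + t = 1)
    {a b : EReal} (ha : 0 < a) (hb : 0 < b) : 0 < (s : EReal) * a + (t : EReal) * b := by
  rcases hs.eq_or_lt with rfl | hs
  · obtain rfl : t = 1 := by linarith
    simpa using hb
  · exact add_pos_of_pos_of_nonneg (EReal.mul_pos (EReal.coe_pos.2 hs) ha)
      (mul_nonneg (EReal.coe_nonneg.2 ht) hb.le)

theorem exists_mem_sublevel_inter_of_mix {X : Type*} [AddCommGroup X] [Module ℝ X]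
    [TopologicalSpace X] [T2Space X] [ContinuousAdd X] [ContinuousSMul ℝ X] {Q : Set X}
    (hQ : IsCompact Q) {g₁ g₂ : X → EReal}
    (hg₁ : LowerSemicontinuousOn g₁ Q) (hg₂ : LowerSemicontinuousOn g₂ Q)
    (hg₁_ne_bot : ∀ q ∈ Q, g₁ q ≠ ⊥) (hg₂_ne_bot : ∀ q ∈ Q, g₂ q ≠ ⊥)
    (hconvex : ∀ t ∈ Icc (0 : ℝ) 1, Convex ℝ {q ∈ Q | mix g₁ g₂ t q ≤ 0})
    (hne : ∀ t ∈ Icc (0 : ℝ) 1, {q ∈ Q | mix g₁ g₂ t q ≤ 0}.Nonempty) :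
    ∃ q ∈ Q, g₁ q ≤ 0 ∧ g₂ q ≤ 0 := by
  set A := Q ∩ g₁ ⁻¹' Iic 0
  set B := Q ∩ g₂ ⁻¹' Iic 0
  have hA : IsCompact A := hg₁.isCompact_inter_preimage_Iic hQ 0
  have hB : IsCompact B := hg₂.isCompact_inter_preimage_Iic hQ 0
  have hcover : ∀ t ∈ Icc (0 : ℝ) 1, ∀ q ∈ Q, mix g₁ g₂ t q ≤ 0 → q ∈ A ∪ B := by
    intro t ht q hq hle
    by_contra! h
    simp only [A, B, mem_union, mem_inter_iff, mem_preimage, mem_Iic, not_or, not_and,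
      not_le] at h
    exact (EReal.coe_mul_add_coe_mul_pos (sub_nonneg.2 ht.2) ht.1 (by ring)
      (h.1 hq) (h.2 hq)).not_ge hle
  set T : Set X → Set ℝ := fun K => {t | t ∈ Icc 0 1 ∧ ∃ q ∈ K, mix g₁ g₂ t q ≤ 0}
  have hT_closed : ∀ K ⊆ Q, IsCompact K → IsClosed (T K) := fun K hKQ hK => by
    have := (lowerSemicontinuousOn_mix hg₁ hg₂ hg₁_ne_bot hg₂_ne_bot).mono
      (prod_mono subset_rfl hKQ) |>.isCompact_inter_preimage_Iic (isCompact_Icc.prod hK) 0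
      |>.image continuous_fst |>.isClosed
    convert this using 1
    ext t
    simp [T, and_assoc]
  have hT_cover : Icc (0 : ℝ) 1 ⊆ T A ∪ T B := fun t ht => by
    obtain ⟨q, hq, hle⟩ := hne t ht
    rcases hcover t ht q hq hle with hqA | hqB
    exacts [.inl ⟨ht, q, hqA, hle⟩, .inr ⟨ht, q, hqB, hle⟩]
  have h0 : (0 : ℝ) ∈ Icc 0 1 := left_mem_Icc.2 zero_le_one
  have h1 : (1 : ℝ) ∈ Icc 0 1 := right_mem_Icc.2 zero_le_one
  have h0A : (Icc (0 : ℝ) 1 ∩ T A).Nonempty := by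
    obtain ⟨q, hq, hle⟩ := hne 0 h0
    exact ⟨0, h0, h0, q, ⟨hq, by simpa [mix] using hle⟩, hle⟩
  have h1B : (Icc (0 : ℝ) 1 ∩ T B).Nonempty := by
    obtain ⟨q, hq, hle⟩ := hne 1 h1
    exact ⟨1, h1, h1, q, ⟨hq, by simpa [mix] using hle⟩, hle⟩
  obtain ⟨t, -, ⟨ht, qa, hqa, hla⟩, -, qb, hqb, hlb⟩ :=
    isPreconnected_closed_iff.1 isPreconnected_Icc (T A) (T B)
      (hT_closed A inter_subset_left hA) (hT_closed B inter_subset_left hB) hT_cover h0A h1B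
  obtain ⟨q, -, ⟨hq, hq₁⟩, -, hq₂⟩ :=
    isPreconnected_closed_iff.1 (hconvex t ht).isPreconnected A B hA.isClosed hB.isClosed
      (fun q hq => hcover t ht q hq.1 hq.2) ⟨qa, ⟨hqa.1, hla⟩, hqa⟩ ⟨qb, ⟨hqb.1, hlb⟩, hqb⟩
  exact ⟨q, hq, hq₁, hq₂⟩

theorem two_point_intersection_lemma
    {W V : Type*} [AddCommGroup W] [Module ℝ W]
    [NormedAddCommGroup V] [NormedSpace ℝ V]
    (𝒟 : Set W) (hD : Convex ℝ 𝒟)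
    (Q : Set V) (hQc : IsCompact Q) (hQconv : Convex ℝ Q)
    (f : W → V → EReal)
    (haff : ∀ p₁ ∈ 𝒟, ∀ p₂ ∈ 𝒟, ∀ a b : ℝ, 0 ≤ a → 0 ≤ b → a + b = 1 →
      ∀ q ∈ Q, f (a • p₁ + b • p₂) q = (a : EReal) * f p₁ q + (b : EReal) * f p₂ q)
    (hconv : ∀ p ∈ 𝒟, ∀ q₁ ∈ Q, ∀ q₂ ∈ Q, ∀ a b : ℝ, 0 ≤ a → 0 ≤ b → a + b = 1 →
      f p (a • q₁ + b • q₂) ≤ (a : EReal) * f p q₁ + (b : EReal) * f p q₂)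
    (hlsc : ∀ p ∈ 𝒟, LowerSemicontinuousOn (f p) Q)
    (hsub : ∀ p ∈ 𝒟,
      IsCompact {q ∈ Q | f p q ≤ 0} ∧ Convex ℝ {q ∈ Q | f p q ≤ 0} ∧
        {q ∈ Q | f p q ≤ 0}.Nonempty) :
    ∀ p₁ ∈ 𝒟, ∀ p₂ ∈ 𝒟, ∃ q ∈ Q, f p₁ q ≤ 0 ∧ f p₂ q ≤ 0 := by
  intro p₁ hp₁ p₂ hp₂
  have hbot : ∀ p ∈ 𝒟, ∀ q₀ ∈ Q, f p q₀ = ⊥ → ∀ q ∈ Q, f p q ≤ 0 :=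
    fun p hp q₀ hq₀ h q hq =>
      (ERealConvexOn.eq_bot_of_eq_bot hQconv (hconv p hp) (hlsc p hp) hq₀ h hq).trans_le bot_le
  by_cases h₁ : ∃ q₀ ∈ Q, f p₁ q₀ = ⊥
  · obtain ⟨q₀, hq₀, h⟩ := h₁
    obtain ⟨q, hq, hq₂⟩ := (hsub p₂ hp₂).2.2
    exact ⟨q, hq, hbot p₁ hp₁ q₀ hq₀ h q hq, hq₂⟩
  by_cases h₂ : ∃ q₀ ∈ Q, f p₂ q₀ = ⊥
  · obtain ⟨q₀, hq₀, h⟩ := h₂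
    obtain ⟨q, hq, hq₁⟩ := (hsub p₁ hp₁).2.2
    exact ⟨q, hq, hq₁, hbot p₂ hp₂ q₀ hq₀ h q hq⟩
  push Not at h₁ h₂
  have hpath : ∀ t ∈ Icc (0 : ℝ) 1, (1 - t) • p₁ + t • p₂ ∈ 𝒟 := fun t ht =>
    hD hp₁ hp₂ (sub_nonneg.2 ht.2) ht.1 (by ring)
  have hsublevel : ∀ t ∈ Icc (0 : ℝ) 1,
      {q ∈ Q | mix (f p₁) (f p₂) t q ≤ 0} = {q ∈ Q | f ((1 - t) • p₁ + t • p₂) q ≤ 0} :=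
    fun t ht => Set.ext fun q => and_congr_right fun hq => by
      rw [haff p₁ hp₁ p₂ hp₂ (1 - t) t (sub_nonneg.2 ht.2) ht.1 (by ring) q hq, mix]
  exact exists_mem_sublevel_inter_of_mix hQc (hlsc p₁ hp₁) (hlsc p₂ hp₂) h₁ h₂
    (fun t ht => hsublevel t ht ▸ (hsub _ (hpath t ht)).2.1)
    (fun t ht => hsublevel t ht ▸ (hsub _ (hpath t ht)).2.2)
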